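/- arXiv:2012.01453 — 8 statements merged into one kernel-verified Lean document; each statement's English description precedes it below -/
import Mathlib

section
/- Let x = (x_1,…,x_m) be a nonzero real vector with Σ_{k=1}^m x_k = 0, let c_1,…,c_m be distinct q-ary strings of length n, and let d_Z ≥ 1 be an integer. Suppose that for every q-ary string z with 1 ≤ wt(z) ≤ d_Z − 1 one has Σ_{k=1}^m x_k ω^{z·c_k} = 0. Write x_k^+ = max(x_k,0), x_k^- = max(−x_k,0), and X = Σ_k x_k^+ (which is positive). Define the vectors ψ_0 = (1/√X) Σ_k √(x_k^+) e_{c_k} and ψ_1 = (1/√X) Σ_k √(x_k^-) e_{c_k}. Then for every q-ary string z with wt(z) ≤ d_Z − 1, ⟨ψ_0, Z^z ψ_0⟩ = ⟨ψ_1, Z^z ψ_1⟩. -/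
open Finset

/-- The primitive `q`-th root of unity `ω = exp(2πi/q)`. -/
noncomputable def omegaQ (q : ℕ) : ℂ := Complex.exp (2 * Real.pi * Complex.I / q)

/-- The diagonal Pauli operator `Z^z`, determined by `Z^z e_c = ω^{z·c} e_c`. -/
noncomputable def Zpauli (n q : ℕ) [NeZero q] (z : Fin n → ZMod q) :
    EuclideanSpace ℂ (Fin n → ZMod q) →ₗ[ℂ] EuclideanSpace ℂ (Fin n → ZMod q) where
  toFun ψ := WithLp.toLp 2 (fun c => omegaQ q ^ (∑ i, z i * c i).val * ψ c)
  map_add' ψ φ := by ext c; simp [mul_add]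
  map_smul' a ψ := by ext c; simp; ring

/-! Since the strings `c_k` are distinct, `ψ_0` and `ψ_1` have coordinates `√(x_k^±)/√X` at `c_k`
and `Z^z` is diagonal, so `⟨ψ_±, Z^z ψ_±⟩ = (1/√X)² Σ_k x_k^± ω^{z·c_k}`. As `x_k^+ - x_k^- = x_k`,
the difference of the two sides is `(1/√X)² Σ_k x_k ω^{z·c_k}`, which vanishes by the hypothesis
when `z ≠ 0` and by `Σ_k x_k = 0` when `z = 0`. -/

lemma Zpauli_apply {n q : ℕ} [NeZero q] (z : Fin n → ZMod q)
    (ψ : EuclideanSpace ℂ (Fin n → ZMod q)) (b : Fin n → ZMod q) :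
    Zpauli n q z ψ b = omegaQ q ^ (∑ i, z i * b i).val * ψ b :=
  rfl

section SumOfSingles

variable {ι α : Type*} [Fintype ι] [DecidableEq α]

lemma inner_sum_smul_single_left [Fintype α] (a : ι → ℂ) (c : ι → α) (w : EuclideanSpace ℂ α) :
    inner ℂ (∑ k, a k • EuclideanSpace.single (c k) (1 : ℂ)) w
      = ∑ k, starRingEnd ℂ (a k) * w (c k) := by
  simp only [sum_inner, inner_smul_left, EuclideanSpace.inner_single_left, map_one, one_mul]

lemma sum_smul_single_apply_of_injective (a : ι → ℂ) {c : ι → α} (hc : Function.Injective c)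
    (j : ι) : (∑ k, a k • EuclideanSpace.single (c k) (1 : ℂ)) (c j) = a j := by
  rw [WithLp.ofLp_sum, Finset.sum_apply, Finset.sum_eq_single j]
  · simp
  · intro k _ hkj
    simp [hc.ne hkj.symm]
  · simp

end SumOfSingles

lemma inner_Zpauli_of_eq_smul_sum_sqrt_smul_single {n q : ℕ} [NeZero q] {m : ℕ}
    {c : Fin m → Fin n → ZMod q} (hc : Function.Injective c) {y : Fin m → ℝ}
    (hy : ∀ k, 0 ≤ y k) {r : ℝ} {ψ : EuclideanSpace ℂ (Fin n → ZMod q)}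
    (hψ : ψ = (r : ℂ) • ∑ k, ((Real.sqrt (y k) : ℝ) : ℂ) • EuclideanSpace.single (c k) (1 : ℂ))
    (z : Fin n → ZMod q) :
    inner ℂ ψ (Zpauli n q z ψ) = (r : ℂ) ^ 2 * ∑ k, (y k : ℂ) * omegaQ q ^ (∑ i, z i * c k i).val := by
  replace hψ : ψ = ∑ k, ((r * Real.sqrt (y k) : ℝ) : ℂ) • EuclideanSpace.single (c k) (1 : ℂ) := by
    simp only [hψ, Finset.smul_sum, smul_smul, Complex.ofReal_mul]
  rw [hψ, inner_sum_smul_single_left, Finset.mul_sum]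
  refine Finset.sum_congr rfl fun k _ => ?_
  rw [Zpauli_apply, sum_smul_single_apply_of_injective _ hc, Complex.conj_ofReal]
  have hsq : (Real.sqrt (y k) : ℂ) * Real.sqrt (y k) = y k := by
    exact_mod_cast Real.mul_self_sqrt (hy k)
  push_cast
  linear_combination (r : ℂ) ^ 2 * omegaQ q ^ (∑ i, z i * c k i).val * hsq

theorem stmt_0_general (n q : ℕ) [NeZero q]
    (m : ℕ) (dZ : ℕ)
    (x : Fin m → ℝ) (hsum : ∑ k, x k = 0)
    (c : Fin m → (Fin n → ZMod q)) (hc : Function.Injective c)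
    (hker : ∀ z : Fin n → ZMod q,
      1 ≤ hammingNorm z → hammingNorm z ≤ dZ - 1 →
      ∑ k, (x k : ℂ) * omegaQ q ^ (∑ i, z i * c k i).val = 0)
    (X : ℝ)
    (ψ0 ψ1 : EuclideanSpace ℂ (Fin n → ZMod q))
    (hψ0 : ψ0 = ((1 / Real.sqrt X : ℝ) : ℂ) •
      ∑ k, ((Real.sqrt (max (x k) 0) : ℝ) : ℂ) • EuclideanSpace.single (c k) (1 : ℂ))
    (hψ1 : ψ1 = ((1 / Real.sqrt X : ℝ) : ℂ) •
      ∑ k, ((Real.sqrt (max (-x k) 0) : ℝ) : ℂ) • EuclideanSpace.single (c k) (1 : ℂ)) :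
    ∀ z : Fin n → ZMod q, hammingNorm z ≤ dZ - 1 →
      (inner ℂ ψ0 (Zpauli n q z ψ0) : ℂ) = inner ℂ ψ1 (Zpauli n q z ψ1) := by
  intro z hz
  have hvanish : ∑ k, (x k : ℂ) * omegaQ q ^ (∑ i, z i * c k i).val = 0 := by
    rcases Nat.eq_zero_or_pos (hammingNorm z) with h0 | hpos
    · obtain rfl : z = 0 := hammingNorm_eq_zero.mp h0
      simpa using congrArg Complex.ofReal hsum
    · exact hker z hpos hz
  rw [inner_Zpauli_of_eq_smul_sum_sqrt_smul_single hc (fun k => le_max_right _ _) hψ0,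
    inner_Zpauli_of_eq_smul_sum_sqrt_smul_single hc (fun k => le_max_right _ _) hψ1]
  congr 1
  rw [← sub_eq_zero, ← Finset.sum_sub_distrib, ← hvanish]
  refine Finset.sum_congr rfl fun k _ => ?_
  rw [← sub_mul, ← Complex.ofReal_sub, max_zero_sub_max_neg_zero_eq_self]

theorem stmt_0 (n q : ℕ) [NeZero q] (hn : 1 ≤ n) (hq : 2 ≤ q)
    (m : ℕ) (dZ : ℕ) (hdZ : 1 ≤ dZ)
    (x : Fin m → ℝ) (hx : x ≠ 0) (hsum : ∑ k, x k = 0)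
    (c : Fin m → (Fin n → ZMod q)) (hc : Function.Injective c)
    (hker : ∀ z : Fin n → ZMod q,
      1 ≤ hammingNorm z → hammingNorm z ≤ dZ - 1 →
      ∑ k, (x k : ℂ) * omegaQ q ^ (∑ i, z i * c k i).val = 0)
    (X : ℝ) (hX : X = ∑ k, max (x k) 0)
    (ψ0 ψ1 : EuclideanSpace ℂ (Fin n → ZMod q))
    (hψ0 : ψ0 = ((1 / Real.sqrt X : ℝ) : ℂ) •
      ∑ k, ((Real.sqrt (max (x k) 0) : ℝ) : ℂ) • EuclideanSpace.single (c k) (1 : ℂ))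
    (hψ1 : ψ1 = ((1 / Real.sqrt X : ℝ) : ℂ) •
      ∑ k, ((Real.sqrt (max (-x k) 0) : ℝ) : ℂ) • EuclideanSpace.single (c k) (1 : ℂ)) :
    ∀ z : Fin n → ZMod q, hammingNorm z ≤ dZ - 1 →
      (inner ℂ ψ0 (Zpauli n q z ψ0) : ℂ) = inner ℂ ψ1 (Zpauli n q z ψ1) :=
  stmt_0_general n q m dZ x hsum c hc hker X ψ0 ψ1 hψ0 hψ1
end

section
/- Let C be a set of q-ary strings of length n whose pairwise Hamming distance is at least d_X (an integer ≥ 1), and let C_0 and C_1 be disjoint subsets of C. Let ψ_0 and ψ_1 be vectors in the Hilbert space that are supported on the basis states {e_c : c ∈ C_0} and {e_c : c ∈ C_1} respectively. Then for all q-ary strings a and b with wt(a) ≤ d_X − 1, one has ⟨ψ_0, (X^a Z^b) ψ_1⟩ = 0. -/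
/-!
`X^a Z^b` sends `e_{c+a}` to a multiple of `e_c`, so `⟨ψ₀, X^a Z^b ψ₁⟩` only involves pairs
`c ∈ C₀`, `c + a ∈ C₁`. Such a pair would be two distinct codewords at Hamming distance
`wt(a) < d_X`.
-/

open Finset

/-- The generalized Pauli operator `X^a Z^b`, determined by
`(X^a Z^b) e_c = ω^{b·c} e_{c−a}`. -/
noncomputable def pauliXZ (n q : ℕ) [NeZero q] (a b : Fin n → ZMod q) :
    EuclideanSpace ℂ (Fin n → ZMod q) →ₗ[ℂ] EuclideanSpace ℂ (Fin n → ZMod q) where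
  toFun ψ := WithLp.toLp 2 (fun d => omegaQ q ^ (∑ i, b i * (d i + a i)).val * ψ (d + a))
  map_add' ψ φ := by ext d; simp [mul_add]
  map_smul' r ψ := by ext d; simp; ring

section Hamming

variable {ι : Type*} [Fintype ι] {β : ι → Type*} [∀ i, AddGroup (β i)] [∀ i, DecidableEq (β i)]

theorem hammingDist_self_add (x a : ∀ i, β i) : hammingDist x (x + a) = hammingNorm a := by
  rw [hammingDist_eq_hammingNorm, neg_add_cancel_left]

theorem add_notMem_of_hammingNorm_le_pred {C C₀ C₁ : Set (∀ i, β i)} {dX : ℕ}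
    (hdist : ∀ c ∈ C, ∀ c' ∈ C, c ≠ c' → dX ≤ hammingDist c c')
    (hC₀ : C₀ ⊆ C) (hC₁ : C₁ ⊆ C) (hdisj : Disjoint C₀ C₁)
    {a : ∀ i, β i} (ha : hammingNorm a ≤ dX - 1) {c : ∀ i, β i} (hc : c ∈ C₀) :
    c + a ∉ C₁ := by
  intro hca
  have hne : c ≠ c + a := fun h => Set.disjoint_left.mp hdisj hc (h ▸ hca)
  have hfar := hdist c (hC₀ hc) (c + a) (hC₁ hca) hne
  have hpos := hammingDist_pos.mpr hne
  rw [hammingDist_self_add] at hfar hpos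
  omega

end Hamming

theorem pauliXZ_apply {n q : ℕ} [NeZero q] (a b : Fin n → ZMod q)
    (ψ : EuclideanSpace ℂ (Fin n → ZMod q)) (d : Fin n → ZMod q) :
    pauliXZ n q a b ψ d = omegaQ q ^ (∑ i, b i * (d i + a i)).val * ψ (d + a) :=
  rfl

theorem inner_pauliXZ_eq_zero {n q : ℕ} [NeZero q] {a : Fin n → ZMod q}
    (b : Fin n → ZMod q) {ψ₀ ψ₁ : EuclideanSpace ℂ (Fin n → ZMod q)}
    (h : ∀ d, ψ₀ d = 0 ∨ ψ₁ (d + a) = 0) :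
    inner ℂ ψ₀ (pauliXZ n q a b ψ₁) = 0 := by
  rw [PiLp.inner_apply]
  refine Finset.sum_eq_zero fun d _ => ?_
  rcases h d with h₀ | h₁
  · simp [h₀]
  · simp [pauliXZ_apply, h₁]

theorem stmt_1_general (n q : ℕ) [NeZero q]
    (dX : ℕ)
    (C : Set (Fin n → ZMod q))
    (hdist : ∀ c ∈ C, ∀ c' ∈ C, c ≠ c' → dX ≤ hammingDist c c')
    (C0 C1 : Set (Fin n → ZMod q)) (hC0 : C0 ⊆ C) (hC1 : C1 ⊆ C)
    (hdisj : Disjoint C0 C1)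
    (ψ0 ψ1 : EuclideanSpace ℂ (Fin n → ZMod q))
    (hsupp0 : ∀ c : Fin n → ZMod q, c ∉ C0 → ψ0 c = 0)
    (hsupp1 : ∀ c : Fin n → ZMod q, c ∉ C1 → ψ1 c = 0) :
    ∀ a b : Fin n → ZMod q, hammingNorm a ≤ dX - 1 →
      (inner ℂ ψ0 (pauliXZ n q a b ψ1) : ℂ) = 0 := by
  intro a b ha
  refine inner_pauliXZ_eq_zero b fun d => ?_
  by_cases hd : d ∈ C0
  · exact Or.inr (hsupp1 _ (add_notMem_of_hammingNorm_le_pred hdist hC0 hC1 hdisj ha hd))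
  · exact Or.inl (hsupp0 _ hd)

theorem stmt_1 (n q : ℕ) [NeZero q] (hn : 1 ≤ n) (hq : 2 ≤ q)
    (dX : ℕ) (hdX : 1 ≤ dX)
    (C : Set (Fin n → ZMod q))
    (hdist : ∀ c ∈ C, ∀ c' ∈ C, c ≠ c' → dX ≤ hammingDist c c')
    (C0 C1 : Set (Fin n → ZMod q)) (hC0 : C0 ⊆ C) (hC1 : C1 ⊆ C)
    (hdisj : Disjoint C0 C1)
    (ψ0 ψ1 : EuclideanSpace ℂ (Fin n → ZMod q))
    (hsupp0 : ∀ c : Fin n → ZMod q, c ∉ C0 → ψ0 c = 0)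
    (hsupp1 : ∀ c : Fin n → ZMod q, c ∉ C1 → ψ1 c = 0) :
    ∀ a b : Fin n → ZMod q, hammingNorm a ≤ dX - 1 →
      (inner ℂ ψ0 (pauliXZ n q a b ψ1) : ℂ) = 0 :=
  stmt_1_general n q dX C hdist C0 C1 hC0 hC1 hdisj ψ0 ψ1 hsupp0 hsupp1
end

section
/- (Gilbert–Varshamov bound) For all integers n ≥ 1, q ≥ 2, and 1 ≤ d ≤ n, there exists a set C of q-ary strings of length n whose pairwise Hamming distance is at least d and whose cardinality satisfies |C| ≥ q^n / V_q(d−1), where V_q(r) = Σ_{w=0}^{r} C(n,w)(q−1)^w is the volume of the q-ary Hamming ball of radius r. -/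
/-!
Greedy construction: a code `C` with minimum distance `d` that cannot be enlarged has every word
within distance `d - 1` of some codeword, so the balls of radius `d - 1` around the codewords
cover all `q ^ n` words. Each ball has at most `V_q(d - 1)` elements: a word at distance `w` from
`c` is determined by the `w` coordinates where it differs from `c` and by one of the `q - 1`
other letters in each of them.
-/

open Finset

/-- `V_q(r) = Σ_{w=0}^{r} C(n,w)(q−1)^w`, the volume of the `q`-ary Hamming ball
of radius `r` in length `n`. -/
def hammingBallVol (n q r : ℕ) : ℕ := ∑ w ∈ Finset.range (r + 1), n.choose w * (q - 1) ^ w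

lemma exists_pairwise_finset_forall_notMem {β : Type*} [Finite β]
    {r : β → β → Prop} (hr : ∀ a b, r a b → r b a) :
    ∃ C : Finset β, (C : Set β).Pairwise r ∧ ∀ x ∉ C, ∃ c ∈ C, ¬ r c x := by
  classical
  obtain ⟨C, hC, hmax⟩ := (Set.toFinite {C : Finset β | (C : Set β).Pairwise r}).exists_maximal
    ⟨∅, by simp⟩
  refine ⟨C, hC, fun x hx => ?_⟩
  by_contra! hfar
  have hins : ((insert x C : Finset β) : Set β).Pairwise r := by
    rw [coe_insert, Set.pairwise_insert]
    exact ⟨hC, fun c hc _ => ⟨hr c x (hfar c hc), hfar c hc⟩⟩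
  exact hx (hmax hins (subset_insert x C) (mem_insert_self x C))

section HammingBall

variable {ι α : Type*} [Fintype ι] [DecidableEq ι] [Fintype α] [DecidableEq α]

lemma card_filter_disagreement_eq_le (x : ι → α) (s : Finset ι) :
    #({y | ({i | x i ≠ y i} : Finset ι) = s} : Finset (ι → α)) ≤ (Fintype.card α - 1) ^ #s := by
  have hcodomain : #(Fintype.piFinset fun i : s => univ.erase (x i)) =
      (Fintype.card α - 1) ^ #s := by
    simp [Fintype.card_piFinset, card_erase_of_mem]
  rw [← hcodomain]
  refine card_le_card_of_injOn (fun (y : ι → α) (i : s) => y i) (fun y hy => ?_)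
    (fun y hy y' hy' h => ?_)
  · simp only [coe_filter, mem_univ, true_and, Set.mem_ofPred_eq] at hy
    simp only [mem_coe, Fintype.mem_piFinset, mem_erase, mem_univ, and_true]
    intro i hi
    have : (i : ι) ∈ ({i | x i ≠ y i} : Finset ι) := hy ▸ i.2
    exact (mem_filter.1 this).2 hi.symm
  · simp only [coe_filter, mem_univ, true_and, Set.mem_ofPred_eq] at hy hy'
    funext i
    by_cases hi : i ∈ s
    · exact congrFun h ⟨i, hi⟩
    · have hxy : x i = y i := by_contra fun hne => hi (hy ▸ mem_filter.2 ⟨mem_univ i, hne⟩)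
      have hxy' : x i = y' i := by_contra fun hne => hi (hy' ▸ mem_filter.2 ⟨mem_univ i, hne⟩)
      rw [← hxy, ← hxy']

lemma card_hammingSphere_le (x : ι → α) (w : ℕ) :
    #{y | hammingDist x y = w} ≤ (Fintype.card ι).choose w * (Fintype.card α - 1) ^ w := by
  have hmaps : ∀ y ∈ ({y | hammingDist x y = w} : Finset (ι → α)),
      ({i | x i ≠ y i} : Finset ι) ∈ powersetCard w univ := fun y hy => by
    simpa [mem_powersetCard_univ, hammingDist] using hy
  have hfibers : ∀ s ∈ powersetCard w (univ : Finset ι),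
      #{y ∈ {y | hammingDist x y = w} | ({i | x i ≠ y i} : Finset ι) = s} ≤
        (Fintype.card α - 1) ^ w := fun s hs => by
    rw [mem_powersetCard_univ] at hs
    rw [← hs, filter_filter]
    exact (card_le_card (monotone_filter_right _ fun y _ h => h.2)).trans
      (card_filter_disagreement_eq_le x s)
  calc #{y | hammingDist x y = w}
      ≤ (Fintype.card α - 1) ^ w * #(powersetCard w (univ : Finset ι)) :=
        card_le_mul_card_image_of_maps_to hmaps _ hfibers
    _ = (Fintype.card ι).choose w * (Fintype.card α - 1) ^ w := by
        rw [card_powersetCard, card_univ, mul_comm]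

lemma card_hammingBall_le (x : ι → α) (r : ℕ) :
    #{y | hammingDist x y ≤ r} ≤ hammingBallVol (Fintype.card ι) (Fintype.card α) r := by
  have hball : ({y | hammingDist x y ≤ r} : Finset (ι → α)) =
      (range (r + 1)).biUnion fun w => {y | hammingDist x y = w} := by
    ext y
    simp
  rw [hball]
  exact card_biUnion_le.trans (sum_le_sum fun w _ => card_hammingSphere_le x w)

lemma card_pow_le_card_mul_hammingBallVol {C : Finset (ι → α)} {r : ℕ}
    (hC : ∀ x, ∃ c ∈ C, hammingDist c x ≤ r) :
    Fintype.card α ^ Fintype.card ι ≤ #C * hammingBallVol (Fintype.card ι) (Fintype.card α) r := by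
  have hcover : (univ : Finset (ι → α)) ⊆ C.biUnion fun c => {y | hammingDist c y ≤ r} :=
    fun x _ => by simpa using hC x
  calc Fintype.card α ^ Fintype.card ι = #(univ : Finset (ι → α)) := by simp
    _ ≤ _ := card_le_card hcover
    _ ≤ _ := card_biUnion_le_card_mul _ _ _ fun c _ => card_hammingBall_le c r

end HammingBall

lemma hammingBallVol_pos (n q r : ℕ) : 0 < hammingBallVol n q r := by
  simp [hammingBallVol, sum_range_succ']

theorem stmt_3_general (n q d : ℕ) [NeZero q] :
    ∃ C : Finset (Fin n → ZMod q),
      (∀ c ∈ C, ∀ c' ∈ C, c ≠ c' → d ≤ hammingDist c c') ∧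
      ((q : ℝ) ^ n / (hammingBallVol n q (d - 1) : ℝ) ≤ (C.card : ℝ)) := by
  obtain ⟨C, hCdist, hCmax⟩ := exists_pairwise_finset_forall_notMem
    (β := Fin n → ZMod q) (r := fun c c' => d ≤ hammingDist c c')
    fun c c' (h : d ≤ hammingDist c c') => (hammingDist_comm c c' ▸ h : d ≤ hammingDist c' c)
  have hcover : ∀ x, ∃ c ∈ C, hammingDist c x ≤ d - 1 := fun x => by
    by_cases hx : x ∈ C
    · exact ⟨x, hx, by simp⟩
    · obtain ⟨c, hc, hcx⟩ := hCmax x hx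
      exact ⟨c, hc, by omega⟩
  have hcount : q ^ n ≤ #C * hammingBallVol n q (d - 1) := by
    simpa using card_pow_le_card_mul_hammingBallVol hcover
  refine ⟨C, hCdist, ?_⟩
  rw [div_le_iff₀ (by exact_mod_cast hammingBallVol_pos n q (d - 1))]
  exact_mod_cast hcount

/-- Gilbert–Varshamov bound. -/
theorem stmt_3 (n q d : ℕ) [NeZero q] (hn : 1 ≤ n) (hq : 2 ≤ q)
    (hd1 : 1 ≤ d) (hdn : d ≤ n) :
    ∃ C : Finset (Fin n → ZMod q),
      (∀ c ∈ C, ∀ c' ∈ C, c ≠ c' → d ≤ hammingDist c c') ∧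
      ((q : ℝ) ^ n / (hammingBallVol n q (d - 1) : ℝ) ≤ (C.card : ℝ)) :=
  stmt_3_general n q d
end

section
/- For all integers n ≥ 1, q ≥ 2, and 0 ≤ r ≤ n(q−1)/q, the volume of the q-ary Hamming ball satisfies V_q(r) = Σ_{w=0}^{r} C(n,w)(q−1)^w ≤ q^{n·Ent_q(r/n)}, where Ent_q : [0,1] → ℝ is the q-ary entropy function Ent_q(x) = −x·log_q x − (1−x)·log_q(1−x) + x·log_q(q−1), with the convention Ent_q(0) = 0 and Ent_q(1) = log_q(q−1). -/
/-!
With `x = r / n ≤ (q - 1) / q` we have `x ≤ (q - 1)(1 - x)`, so for `w ≤ r` each term of the ball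
volume satisfies `C(n,w)(q-1)^w · x^r (1-x)^(n-r) ≤ (q-1)^r · C(n,w) x^w (1-x)^(n-w)`. Summing and
using that a partial sum of the binomial expansion of `(x + (1 - x))^n` is at most `1` gives
`V_q(r) · x^r (1-x)^(n-r) ≤ (q-1)^r`, and the right-hand side of the claim is exactly
`(q-1)^r / (x^r (1-x)^(n-r))`.
-/

open Finset Real

/-- The `q`-ary entropy function `Ent_q(x)`.  (With Mathlib's junk-value conventions
`logb q 0 = 0`, this automatically satisfies `Ent_q(0) = 0` and
`Ent_q(1) = log_q(q−1)`.) -/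
noncomputable def entq (q : ℕ) (x : ℝ) : ℝ :=
  -x * Real.logb q x - (1 - x) * Real.logb q (1 - x) + x * Real.logb q (q - 1)

lemma sum_range_choose_mul_pow_mul_pow_le_one {x : ℝ} (hx0 : 0 ≤ x) (hx1 : x ≤ 1) {n r : ℕ}
    (hrn : r ≤ n) :
    ∑ w ∈ range (r + 1), (n.choose w : ℝ) * x ^ w * (1 - x) ^ (n - w) ≤ 1 := by
  have hx1' : 0 ≤ 1 - x := sub_nonneg.2 hx1
  calc ∑ w ∈ range (r + 1), (n.choose w : ℝ) * x ^ w * (1 - x) ^ (n - w)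
      ≤ ∑ w ∈ range (n + 1), (n.choose w : ℝ) * x ^ w * (1 - x) ^ (n - w) :=
        sum_le_sum_of_subset_of_nonneg (range_subset_range.2 (by omega))
          fun _ _ _ => by positivity
    _ = (x + (1 - x)) ^ n := by rw [add_pow]; exact sum_congr rfl fun _ _ => by ring
    _ = 1 := by simp

lemma pow_mul_pow_mul_pow_le {a x : ℝ} (ha : 0 ≤ a) (hx0 : 0 ≤ x) (hx1 : x ≤ 1)
    (hxa : x ≤ a * (1 - x)) {n r w : ℕ} (hwr : w ≤ r) (hrn : r ≤ n) :
    a ^ w * (x ^ r * (1 - x) ^ (n - r)) ≤ a ^ r * (x ^ w * (1 - x) ^ (n - w)) := by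
  obtain ⟨k, rfl⟩ := Nat.exists_eq_add_of_le hwr
  have hnw : n - w = n - (w + k) + k := by omega
  have hxk : x ^ k ≤ a ^ k * (1 - x) ^ k := mul_pow a (1 - x) k ▸ pow_le_pow_left₀ hx0 hxa k
  have hx1' : 0 ≤ 1 - x := sub_nonneg.2 hx1
  rw [hnw]
  calc a ^ w * (x ^ (w + k) * (1 - x) ^ (n - (w + k)))
      = a ^ w * x ^ w * (1 - x) ^ (n - (w + k)) * x ^ k := by ring
    _ ≤ a ^ w * x ^ w * (1 - x) ^ (n - (w + k)) * (a ^ k * (1 - x) ^ k) := by gcongr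
    _ = a ^ (w + k) * (x ^ w * (1 - x) ^ (n - (w + k) + k)) := by ring

lemma cast_hammingBallVol {n q r : ℕ} (hq : 1 ≤ q) :
    (hammingBallVol n q r : ℝ) = ∑ w ∈ range (r + 1), (n.choose w : ℝ) * ((q : ℝ) - 1) ^ w := by
  simp [hammingBallVol, Nat.cast_sub hq]

lemma hammingBallVol_mul_pow_mul_pow_le {n q r : ℕ} (hq : 1 ≤ q) (hrn : r ≤ n) {x : ℝ}
    (hx0 : 0 ≤ x) (hx1 : x ≤ 1) (hxq : x ≤ ((q : ℝ) - 1) * (1 - x)) :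
    (hammingBallVol n q r : ℝ) * (x ^ r * (1 - x) ^ (n - r)) ≤ ((q : ℝ) - 1) ^ r := by
  have hq1 : (0 : ℝ) ≤ q - 1 := sub_nonneg.2 (by exact_mod_cast hq)
  rw [cast_hammingBallVol hq, sum_mul]
  calc ∑ w ∈ range (r + 1), (n.choose w : ℝ) * ((q : ℝ) - 1) ^ w * (x ^ r * (1 - x) ^ (n - r))
      ≤ ∑ w ∈ range (r + 1), ((q : ℝ) - 1) ^ r * ((n.choose w : ℝ) * x ^ w * (1 - x) ^ (n - w)) :=
        sum_le_sum fun w hw => by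
          have hwr : w ≤ r := Nat.lt_succ_iff.1 (mem_range.1 hw)
          have := pow_mul_pow_mul_pow_le hq1 hx0 hx1 hxq hwr hrn
          calc (n.choose w : ℝ) * ((q : ℝ) - 1) ^ w * (x ^ r * (1 - x) ^ (n - r))
              = n.choose w * (((q : ℝ) - 1) ^ w * (x ^ r * (1 - x) ^ (n - r))) := by ring
            _ ≤ n.choose w * (((q : ℝ) - 1) ^ r * (x ^ w * (1 - x) ^ (n - w))) := by gcongr
            _ = _ := by ring
    _ = ((q : ℝ) - 1) ^ r * ∑ w ∈ range (r + 1), (n.choose w : ℝ) * x ^ w * (1 - x) ^ (n - w) :=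
        (mul_sum _ _ _).symm
    _ ≤ ((q : ℝ) - 1) ^ r :=
        mul_le_of_le_one_right (pow_nonneg hq1 r)
          (sum_range_choose_mul_pow_mul_pow_le_one hx0 hx1 hrn)

lemma rpow_mul_entq {q n r : ℕ} (hq : 2 ≤ q) (hrn : r ≤ n) {x : ℝ} (hx0 : 0 < x) (hx1 : x < 1)
    (hnx : (n : ℝ) * x = r) :
    (q : ℝ) ^ ((n : ℝ) * entq q x) = ((q : ℝ) - 1) ^ r / (x ^ r * (1 - x) ^ (n - r)) := by
  have hq0 : (0 : ℝ) < q := by positivity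
  have hq1 : (1 : ℝ) ≠ q := by exact_mod_cast (by omega : 1 ≠ q)
  have hx1' : 0 < 1 - x := sub_pos.2 hx1
  have hqm1 : (0 : ℝ) < q - 1 := by
    have : (2 : ℝ) ≤ q := by exact_mod_cast hq
    linarith
  have hexp : (n : ℝ) * entq q x
      = logb q x * -(r : ℝ) + logb q (1 - x) * -((n - r : ℕ) : ℝ) + logb q (q - 1) * r := by
    rw [entq, Nat.cast_sub hrn]
    linear_combination (-logb q x + logb q (1 - x) + logb q (q - 1)) * hnx
  rw [hexp, rpow_add hq0, rpow_add hq0, rpow_mul hq0.le, rpow_mul hq0.le, rpow_mul hq0.le,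
    rpow_logb hq0 hq1.symm hx0, rpow_logb hq0 hq1.symm hx1', rpow_logb hq0 hq1.symm hqm1,
    rpow_neg hx0.le, rpow_neg hx1'.le, rpow_natCast, rpow_natCast, rpow_natCast]
  field_simp

theorem stmt_4_general (n q r : ℕ) (hq : 2 ≤ q)
    (hr : (r : ℝ) ≤ n * (q - 1) / q) :
    (hammingBallVol n q r : ℝ) ≤ (q : ℝ) ^ ((n : ℝ) * entq q ((r : ℝ) / n)) := by
  rcases Nat.eq_zero_or_pos r with rfl | hr0
  · simp [hammingBallVol, entq]
  have hq2 : (2 : ℝ) ≤ q := by exact_mod_cast hq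
  have hq0 : (0 : ℝ) < q := by positivity
  have hrq : (r : ℝ) * q ≤ n * (q - 1) := by rwa [le_div_iff₀ hq0] at hr
  have hn0 : (0 : ℝ) < n := by
    have : (0 : ℝ) < r * q := mul_pos (by exact_mod_cast hr0) hq0
    exact pos_of_mul_pos_left (this.trans_le hrq) (by linarith)
  have hrn : r < n := by exact_mod_cast (show (r : ℝ) < n by nlinarith)
  set x := (r : ℝ) / n
  have hnx : (n : ℝ) * x = r := mul_div_cancel₀ _ hn0.ne'
  have hx0 : 0 < x := by positivity
  have hxq : x * q ≤ q - 1 := by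
    rw [div_mul_eq_mul_div, div_le_iff₀ hn0]
    linarith
  have hx1 : x < 1 := by nlinarith
  rw [rpow_mul_entq hq hrn.le hx0 hx1 hnx, le_div_iff₀ (by positivity)]
  exact hammingBallVol_mul_pow_mul_pow_le (by omega) hrn.le hx0.le hx1.le (by linarith)

theorem stmt_4 (n q r : ℕ) (hn : 1 ≤ n) (hq : 2 ≤ q)
    (hr : (r : ℝ) ≤ n * (q - 1) / q) :
    (hammingBallVol n q r : ℝ) ≤ (q : ℝ) ^ ((n : ℝ) * entq q ((r : ℝ) / n)) :=
  stmt_4_general n q r hq hr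
end

section
/- Every string t of length n over the alphabet Σ = {m ∈ ℤ : |m| ≤ s} is ~-equivalent to exactly one irreducible string; that is, for each such t there exists a unique irreducible string c with t ~ c. -/
open Finset

/-- The alphabet `Σ = {m ∈ ℤ : |m| ≤ s}`. -/
abbrev SpinLetter (s : ℕ) := {m : ℤ // m ∈ Finset.Icc (-(s : ℤ)) (s : ℤ)}

/-- Strings of length `n` over `Σ`. -/
abbrev SpinStr (s n : ℕ) := Fin n → SpinLetter s

/-- The single-move relation `R`: exchange `0m ↔ m0` for `m ∈ Σ_*`, or
create/annihilate `00 ↔ m(−m)` for `m ∈ {1,…,s}`, at adjacent positions `k, k+1`. -/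
def MoveRel (s n : ℕ) (u v : SpinStr s n) : Prop :=
  ∃ k : ℕ, ∃ hk1 : k + 1 < n,
    (∀ i : Fin n, (i : ℕ) ≠ k → (i : ℕ) ≠ k + 1 → u i = v i) ∧
    ((∃ m : ℤ, m ≠ 0 ∧ |m| ≤ (s : ℤ) ∧
        (((u ⟨k, Nat.lt_of_succ_lt hk1⟩ : ℤ) = 0 ∧ (u ⟨k + 1, hk1⟩ : ℤ) = m ∧
          (v ⟨k, Nat.lt_of_succ_lt hk1⟩ : ℤ) = m ∧ (v ⟨k + 1, hk1⟩ : ℤ) = 0) ∨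
         ((u ⟨k, Nat.lt_of_succ_lt hk1⟩ : ℤ) = m ∧ (u ⟨k + 1, hk1⟩ : ℤ) = 0 ∧
          (v ⟨k, Nat.lt_of_succ_lt hk1⟩ : ℤ) = 0 ∧ (v ⟨k + 1, hk1⟩ : ℤ) = m))) ∨
     (∃ m : ℤ, 1 ≤ m ∧ m ≤ (s : ℤ) ∧
        (((u ⟨k, Nat.lt_of_succ_lt hk1⟩ : ℤ) = 0 ∧ (u ⟨k + 1, hk1⟩ : ℤ) = 0 ∧
          (v ⟨k, Nat.lt_of_succ_lt hk1⟩ : ℤ) = m ∧ (v ⟨k + 1, hk1⟩ : ℤ) = -m) ∨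
         ((u ⟨k, Nat.lt_of_succ_lt hk1⟩ : ℤ) = m ∧ (u ⟨k + 1, hk1⟩ : ℤ) = -m ∧
          (v ⟨k, Nat.lt_of_succ_lt hk1⟩ : ℤ) = 0 ∧ (v ⟨k + 1, hk1⟩ : ℤ) = 0))))

/-- A string is irreducible if it has the form `x_1 … x_k 0 … 0` with all `x_i ∈ Σ_*`
and no index `i < k` with `x_i > 0` and `x_{i+1} = −x_i`. -/
def IrreducibleStr (s n : ℕ) (c : SpinStr s n) : Prop :=
  ∃ k : ℕ, k ≤ n ∧
    (∀ i : Fin n, (i : ℕ) < k → (c i : ℤ) ≠ 0) ∧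
    (∀ i : Fin n, k ≤ (i : ℕ) → (c i : ℤ) = 0) ∧
    (∀ i : Fin n, ∀ h : (i : ℕ) + 1 < n, (i : ℕ) + 1 < k →
      ¬(0 < (c i : ℤ) ∧ (c ⟨(i : ℕ) + 1, h⟩ : ℤ) = -(c i : ℤ)))

/-! Read only the nonzero letters of a string. A move then either changes nothing or inserts or
deletes an adjacent factor `m (-m)` with `m > 0`; two such factors never overlap, so reducing
them away is confluent, and the result, computed by a stack, is an invariant of `~`. An
irreducible string is its reduced word padded with zeros, so it is determined by the invariant.
Existence is by descent: a string with a `0` before a nonzero letter, or with a factor `m (-m)`,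
admits a move lowering the sum of the positions of its nonzero letters, and a string with
neither is irreducible. -/

namespace SpinStr

def Cancels (a b : ℤ) : Prop := 0 < a ∧ b = -a

instance : DecidableRel Cancels := fun a b => inferInstanceAs (Decidable (0 < a ∧ b = -a))

def pushLetter : List ℤ → ℤ → List ℤ
  | a :: st, x => if Cancels a x then st else x :: a :: st
  | [], x => [x]

lemma pushLetter_of_not_cancels {st : List ℤ} {x : ℤ} (h : ∀ a ∈ st.head?, ¬Cancels a x) :
    pushLetter st x = x :: st := by
  cases st with
  | nil => rfl
  | cons a st => exact if_neg (h a rfl)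

lemma pushLetter_pushLetter_neg (st : List ℤ) {a : ℤ} (ha : 0 < a) :
    pushLetter (pushLetter st a) (-a) = st := by
  rw [pushLetter_of_not_cancels (x := a) fun b _ ⟨hb, hab⟩ => by omega]
  exact if_pos ⟨ha, rfl⟩

lemma foldl_pushLetter_cancel (st l₁ l₂ : List ℤ) {a : ℤ} (ha : 0 < a) :
    (l₁ ++ a :: -a :: l₂).foldl pushLetter st = (l₁ ++ l₂).foldl pushLetter st := by
  simp only [List.foldl_append, List.foldl_cons, pushLetter_pushLetter_neg _ ha]

lemma foldl_pushLetter_of_isChain :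
    ∀ {l st : List ℤ}, (st.head?.toList ++ l).IsChain (fun a b => ¬Cancels a b) →
      l.foldl pushLetter st = l.reverse ++ st
  | [], _, _ => by simp
  | x :: l, st, h => by
    have hx : ∀ a ∈ st.head?, ¬Cancels a x := by
      cases st with
      | nil => simp
      | cons a st => simpa using (List.isChain_cons_cons.mp h).1
    have hl : ((x :: st).head?.toList ++ l).IsChain (fun a b => ¬Cancels a b) := by
      cases st with
      | nil => exact h
      | cons a st => exact (List.isChain_cons_cons.mp h).2
    rw [List.foldl_cons, pushLetter_of_not_cancels hx, foldl_pushLetter_of_isChain hl]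
    simp

variable {s n : ℕ}

def letters (t : SpinStr s n) : List ℤ := List.ofFn fun i => (t i : ℤ)

@[simp] lemma length_letters (t : SpinStr s n) : (letters t).length = n := List.length_ofFn

@[simp] lemma getElem_letters (t : SpinStr s n) (i : ℕ) (h : i < (letters t).length) :
    (letters t)[i] = t ⟨i, by simpa using h⟩ := List.getElem_ofFn ..

lemma letters_injective : Function.Injective (letters : SpinStr s n → List ℤ) :=
  fun _ _ h => funext fun i => Subtype.ext (congrFun (List.ofFn_injective h) i)

def nonzeroLetters (t : SpinStr s n) : List ℤ := (letters t).filter (· ≠ 0)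

-- The reduced word of the nonzero letters, in reverse order.
def reducedStack (t : SpinStr s n) : List ℤ := (nonzeroLetters t).foldl pushLetter []

lemma letters_eq_take_append_drop (t : SpinStr s n) {k : ℕ} (hk : k + 1 < n) :
    letters t = (letters t).take k ++
      (t ⟨k, by omega⟩ : ℤ) :: (t ⟨k + 1, hk⟩ : ℤ) :: (letters t).drop (k + 2) := by
  conv_lhs => rw [← List.take_append_drop k (letters t)]
  rw [List.drop_eq_getElem_cons (by simp; omega), List.drop_eq_getElem_cons (by simp; omega)]
  simp

lemma take_letters_congr {u v : SpinStr s n} {k : ℕ} (h : ∀ i : Fin n, (i : ℕ) < k → u i = v i) :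
    (letters u).take k = (letters v).take k :=
  List.ext_getElem (by simp) fun i h₁ _ => by
    simp only [List.length_take, length_letters, lt_min_iff] at h₁
    simp [h ⟨i, h₁.2⟩ h₁.1]

lemma drop_letters_congr {u v : SpinStr s n} {k : ℕ} (h : ∀ i : Fin n, k ≤ (i : ℕ) → u i = v i) :
    (letters u).drop k = (letters v).drop k :=
  List.ext_getElem (by simp) fun i h₁ _ => by
    simp only [List.length_drop, length_letters] at h₁
    simp [h ⟨k + i, by omega⟩ (by simp)]

lemma reducedStack_eq_of_moveRel {u v : SpinStr s n} (h : MoveRel s n u v) :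
    reducedStack u = reducedStack v := by
  obtain ⟨k, hk, hoff, hcase⟩ := h
  have htake := take_letters_congr (k := k) fun i hi => hoff i (by omega) (by omega)
  have hdrop := drop_letters_congr (k := k + 2) fun i hi => hoff i (by omega) (by omega)
  unfold reducedStack nonzeroLetters
  rw [letters_eq_take_append_drop u hk, letters_eq_take_append_drop v hk, List.filter_append,
    List.filter_append, htake, hdrop]
  rcases hcase with ⟨m, hm, -, ⟨h₁, h₂, h₃, h₄⟩ | ⟨h₁, h₂, h₃, h₄⟩⟩ |
      ⟨m, hm, -, ⟨h₁, h₂, h₃, h₄⟩ | ⟨h₁, h₂, h₃, h₄⟩⟩ <;>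
    rw [h₁, h₂, h₃, h₄]
  · simp [hm]
  · simp [hm]
  · simpa [show m ≠ 0 by omega] using (foldl_pushLetter_cancel _ _ _ (by omega : 0 < m)).symm
  · simpa [show m ≠ 0 by omega] using foldl_pushLetter_cancel _ _ _ (by omega : 0 < m)

lemma reducedStack_eq_of_eqvGen {u v : SpinStr s n} (h : Relation.EqvGen (MoveRel s n) u v) :
    reducedStack u = reducedStack v := by
  induction h with
  | rel _ _ h => exact reducedStack_eq_of_moveRel h
  | refl => rfl
  | symm _ _ _ ih => exact ih.symm
  | trans _ _ _ _ _ ih₁ ih₂ => exact ih₁.trans ih₂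

end SpinStr

namespace IrreducibleStr

open SpinStr

variable {s n : ℕ}

lemma exists_letters_eq {c : SpinStr s n} (hc : IrreducibleStr s n c) :
    ∃ w : List ℤ, letters c = w ++ List.replicate (n - w.length) 0 ∧ (∀ x ∈ w, x ≠ 0) ∧
      w.IsChain fun a b => ¬Cancels a b := by
  obtain ⟨k, hk, hnz, hz, hchain⟩ := hc
  have hlen : ((letters c).take k).length = k := by simp [hk]
  refine ⟨(letters c).take k, ?_, fun x hx => ?_, ?_⟩
  · have hdrop : (letters c).drop k = List.replicate (n - k) 0 := by
      refine List.eq_replicate_iff.mpr ⟨by simp, fun x hx => ?_⟩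
      obtain ⟨i, hi, rfl⟩ := List.mem_iff_getElem.mp hx
      simp only [List.length_drop, length_letters] at hi
      simpa using hz ⟨k + i, by omega⟩ (by simp)
    rw [hlen, ← hdrop, List.take_append_drop]
  · obtain ⟨i, hi, rfl⟩ := List.mem_iff_getElem.mp hx
    rw [hlen] at hi
    simpa using hnz ⟨i, by omega⟩ hi
  · refine List.isChain_iff_getElem.mpr fun i hi => ?_
    rw [hlen] at hi
    simpa [Cancels] using hchain ⟨i, by omega⟩ (by simp; omega) hi

lemma letters_eq {c : SpinStr s n} (hc : IrreducibleStr s n c) :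
    letters c = (reducedStack c).reverse ++
      List.replicate (n - (reducedStack c).length) 0 := by
  obtain ⟨w, hw, hnz, hchain⟩ := hc.exists_letters_eq
  have hnonzero : nonzeroLetters c = w := by
    rw [nonzeroLetters, hw, List.filter_append, List.filter_eq_self.mpr (by simpa using hnz)]
    simp
  have hstack : reducedStack c = w.reverse := by
    rw [reducedStack, hnonzero, foldl_pushLetter_of_isChain (by simpa using hchain),
      List.append_nil]
  rw [hstack, List.reverse_reverse, List.length_reverse, hw]

lemma eq_of_reducedStack_eq {c c' : SpinStr s n} (hc : IrreducibleStr s n c)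
    (hc' : IrreducibleStr s n c') (h : reducedStack c = reducedStack c') : c = c' :=
  letters_injective (by rw [hc.letters_eq, hc'.letters_eq, h])

end IrreducibleStr

namespace SpinStr

variable {s n : ℕ}

def weight (t : SpinStr s n) : ℕ := ∑ i, if (t i : ℤ) = 0 then 0 else (i : ℕ) + 1

lemma exists_moveRel_weight_lt_of_eq_zero_of_ne_zero (t : SpinStr s n) {k : ℕ} (hk : k + 1 < n)
    (h₀ : (t ⟨k, by omega⟩ : ℤ) = 0) (h₁ : (t ⟨k + 1, hk⟩ : ℤ) ≠ 0) :
    ∃ v, MoveRel s n t v ∧ weight v < weight t := by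
  set a : Fin n := ⟨k, by omega⟩
  set b : Fin n := ⟨k + 1, hk⟩
  have hab : a ≠ b := by simp [a, b, Fin.ext_iff]
  set σ := Equiv.swap a b
  refine ⟨t ∘ σ, ⟨k, hk, fun i hia hib => ?_, Or.inl ⟨t b, h₁, abs_le.mpr (mem_Icc.mp (t b).2),
    Or.inl ⟨h₀, rfl, by simp [σ, a], by simpa [σ, b] using h₀⟩⟩⟩, ?_⟩
  · rw [Function.comp_apply, Equiv.swap_apply_of_ne_of_ne (by simpa [a, Fin.ext_iff])
      (by simpa [b, Fin.ext_iff])]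
  · have hreindex : weight (t ∘ σ) =
        ∑ i, if (t i : ℤ) = 0 then 0 else (σ i : ℕ) + 1 := by
      rw [weight, ← Equiv.sum_comp σ]
      simp [σ]
    rw [hreindex, weight]
    refine Finset.sum_lt_sum (fun i _ => ?_) ⟨b, mem_univ b, ?_⟩
    · by_cases hi : (t i : ℤ) = 0
      · simp [hi]
      · have hia : i ≠ a := by rintro rfl; exact hi h₀
        rcases eq_or_ne i b with rfl | hib
        · simp [σ, hi, a, b]
        · simp [σ, hi, Equiv.swap_apply_of_ne_of_ne hia hib]
    · simp [σ, h₁, a, b]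

lemma exists_moveRel_weight_lt_of_cancels (t : SpinStr s n) {k : ℕ} (hk : k + 1 < n)
    (h : Cancels (t ⟨k, by omega⟩) (t ⟨k + 1, hk⟩)) :
    ∃ v, MoveRel s n t v ∧ weight v < weight t := by
  obtain ⟨hpos, hneg⟩ := h
  set a : Fin n := ⟨k, by omega⟩
  set b : Fin n := ⟨k + 1, hk⟩
  let zero : SpinLetter s := ⟨0, by simp⟩
  set v : SpinStr s n := fun i => if i = a ∨ i = b then zero else t i
  refine ⟨v, ⟨k, hk, fun i hia hib => ?_, Or.inr ⟨t a, hpos, (mem_Icc.mp (t a).2).2,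
    Or.inr ⟨rfl, hneg, by simp [v, zero, a], by simp [v, zero, b]⟩⟩⟩, ?_⟩
  · simp [v, a, b, Fin.ext_iff, hia, hib]
  · refine Finset.sum_lt_sum (fun i _ => ?_) ⟨a, mem_univ a, ?_⟩
    · by_cases hi : i = a ∨ i = b <;> simp [v, hi, zero]
    · simp [v, zero, hpos.ne']

lemma eq_zero_of_le_of_eq_zero (t : SpinStr s n)
    (hzero : ∀ k (hk : k + 1 < n), (t ⟨k, by omega⟩ : ℤ) = 0 → (t ⟨k + 1, hk⟩ : ℤ) = 0)
    {i j : ℕ} (hij : i ≤ j) (hj : j < n) (hi : (t ⟨i, by omega⟩ : ℤ) = 0) :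
    (t ⟨j, hj⟩ : ℤ) = 0 := by
  induction j, hij using Nat.le_induction with
  | base => exact hi
  | succ j _ ih => exact hzero j hj (ih (by omega) hi)

lemma irreducibleStr_of_forall_not_cancels (t : SpinStr s n)
    (hzero : ∀ k (hk : k + 1 < n), (t ⟨k, by omega⟩ : ℤ) = 0 → (t ⟨k + 1, hk⟩ : ℤ) = 0)
    (hcancel : ∀ k (hk : k + 1 < n), ¬Cancels (t ⟨k, by omega⟩) (t ⟨k + 1, hk⟩)) :
    IrreducibleStr s n t := by
  classical
  have hex : ∃ j, ∀ i : Fin n, j ≤ (i : ℕ) → (t i : ℤ) = 0 := ⟨n, fun i hi => by omega⟩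
  refine ⟨Nat.find hex, Nat.find_min' hex fun i hi => by omega, fun i hi h₀ => ?_,
    Nat.find_spec hex, fun i hi _ => hcancel i hi⟩
  have := Nat.find_min' hex fun j hj => eq_zero_of_le_of_eq_zero t hzero hj j.isLt h₀
  omega

lemma exists_moveRel_weight_lt_or_irreducibleStr (t : SpinStr s n) :
    (∃ v, MoveRel s n t v ∧ weight v < weight t) ∨ IrreducibleStr s n t := by
  by_cases hzero : ∀ k (hk : k + 1 < n), (t ⟨k, by omega⟩ : ℤ) = 0 → (t ⟨k + 1, hk⟩ : ℤ) = 0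
  · by_cases hcancel : ∀ k (hk : k + 1 < n), ¬Cancels (t ⟨k, by omega⟩) (t ⟨k + 1, hk⟩)
    · exact Or.inr (irreducibleStr_of_forall_not_cancels t hzero hcancel)
    · push Not at hcancel
      obtain ⟨k, hk, h⟩ := hcancel
      exact Or.inl (exists_moveRel_weight_lt_of_cancels t hk h)
  · push Not at hzero
    obtain ⟨k, hk, h₀, h₁⟩ := hzero
    exact Or.inl (exists_moveRel_weight_lt_of_eq_zero_of_ne_zero t hk h₀ h₁)

lemma exists_irreducibleStr_eqvGen (t : SpinStr s n) :
    ∃ c, IrreducibleStr s n c ∧ Relation.EqvGen (MoveRel s n) t c := by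
  induction h : weight t using Nat.strong_induction_on generalizing t with
  | _ w ih =>
    rcases exists_moveRel_weight_lt_or_irreducibleStr t with ⟨v, hv, hlt⟩ | hirr
    · obtain ⟨c, hc, hvc⟩ := ih _ (h ▸ hlt) v rfl
      exact ⟨c, hc, .trans _ _ _ (.rel _ _ hv) hvc⟩
    · exact ⟨t, hirr, .refl t⟩

end SpinStr

theorem stmt_7_general (s n : ℕ) (t : SpinStr s n) :
    ∃! c : SpinStr s n, IrreducibleStr s n c ∧ Relation.EqvGen (MoveRel s n) t c := by
  obtain ⟨c, hc, htc⟩ := SpinStr.exists_irreducibleStr_eqvGen t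
  refine ⟨c, ⟨hc, htc⟩, fun c' ⟨hc', htc'⟩ => hc'.eq_of_reducedStack_eq hc ?_⟩
  rw [← SpinStr.reducedStack_eq_of_eqvGen htc, SpinStr.reducedStack_eq_of_eqvGen htc']

theorem stmt_7 (s n : ℕ) (hs : 1 ≤ s) (hn : 1 ≤ n) (t : SpinStr s n) :
    ∃! c : SpinStr s n, IrreducibleStr s n c ∧ Relation.EqvGen (MoveRel s n) t c :=
  stmt_7_general s n t
end

section
/- For every integer s ≥ 1, the cardinalities |T_n| satisfy the linear recursion |T_{n+2}| = 2s·|T_{n+1}| − s·|T_n| for all n ≥ 0, with initial conditions |T_0| = 1 and |T_1| = 2s. -/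
open Finset

/-- `T_n`: the set of strings `t : Fin n → ℤ` with all letters in
`Σ_* = {m : 1 ≤ |m| ≤ s}` such that no letter `t_j > 0` is immediately followed by
`t_{j+1} = −t_j`. -/
noncomputable def Tset (s n : ℕ) : Finset (Fin n → ℤ) :=
  letI := Classical.decPred
    (fun t : Fin n → ℤ => (∀ i, t i ≠ 0) ∧
      ∀ (i : Fin n) (h : (i : ℕ) + 1 < n), ¬(0 < t i ∧ t ⟨(i : ℕ) + 1, h⟩ = -t i))
  (Fintype.piFinset fun _ : Fin n => Finset.Icc (-(s : ℤ)) (s : ℤ)).filter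
    (fun t => (∀ i, t i ≠ 0) ∧
      ∀ (i : Fin n) (h : (i : ℕ) + 1 < n), ¬(0 < t i ∧ t ⟨(i : ℕ) + 1, h⟩ = -t i))

/-!
Split a word of `T_{n+1}` into its first letter `a` and its tail `u ∈ T_n`. Of the `2s · |T_n|`
pairs `(a, u)`, exactly those with `a > 0` and `u` starting with `-a` are excluded, and these
are in bijection with `{1, …, s} × T_{n-1}` via `(a, -a w) ↦ (a, w)`: prefixing the negative
letter `-a` to a word `w ∈ T_{n-1}` never creates a forbidden factor. Hence
`|T_{n+2}| + s · |T_n| = 2s · |T_{n+1}|`.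
-/

namespace Tset

noncomputable def alphabet (s : ℕ) : Finset ℤ := (Icc (-(s : ℤ)) s).erase 0

lemma mem_alphabet {s : ℕ} {a : ℤ} : a ∈ alphabet s ↔ -(s : ℤ) ≤ a ∧ a ≤ s ∧ a ≠ 0 := by
  simp only [alphabet, mem_erase, mem_Icc]
  tauto

lemma card_alphabet (s : ℕ) : #(alphabet s) = 2 * s := by
  rw [alphabet, card_erase_of_mem (by simp), Int.card_Icc]
  omega

/-- Prefixing the letter `a` to `u` creates the forbidden factor `a, -a` with `a > 0`. -/
def CancelsHead {n : ℕ} (a : ℤ) (u : Fin n → ℤ) : Prop :=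
  ∃ h : 0 < n, 0 < a ∧ u ⟨0, h⟩ = -a

instance {n : ℕ} (a : ℤ) (u : Fin n → ℤ) : Decidable (CancelsHead a u) :=
  inferInstanceAs (Decidable (∃ _ : 0 < n, _))

lemma mem_iff {s n : ℕ} {t : Fin n → ℤ} :
    t ∈ Tset s n ↔ (∀ i, t i ∈ alphabet s) ∧
      ∀ (i : Fin n) (h : (i : ℕ) + 1 < n), ¬(0 < t i ∧ t ⟨(i : ℕ) + 1, h⟩ = -t i) := by
  simp only [Tset, mem_filter, Fintype.mem_piFinset, mem_Icc, mem_alphabet]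
  constructor
  · rintro ⟨hbound, hne, hpat⟩
    exact ⟨fun i => ⟨(hbound i).1, (hbound i).2, hne i⟩, hpat⟩
  · rintro ⟨hletter, hpat⟩
    exact ⟨fun i => ⟨(hletter i).1, (hletter i).2.1⟩, fun i => (hletter i).2.2, hpat⟩

lemma cons_mem_iff {s n : ℕ} {a : ℤ} {u : Fin n → ℤ} :
    (Fin.cons a u : Fin (n + 1) → ℤ) ∈ Tset s (n + 1) ↔
      a ∈ alphabet s ∧ u ∈ Tset s n ∧ ¬CancelsHead a u := by
  simp only [mem_iff, Fin.forall_fin_succ, Fin.cons_zero, Fin.cons_succ, CancelsHead,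
    not_exists]
  constructor
  · rintro ⟨⟨ha, hu⟩, hhead, htail⟩
    exact ⟨ha, ⟨hu, fun i h => htail i (by simpa using h)⟩,
      fun h => hhead (by simpa using h)⟩
  · rintro ⟨ha, ⟨hu, htail⟩, hhead⟩
    exact ⟨⟨ha, hu⟩, fun h => hhead (by simpa using h), fun i h => htail i (by simpa using h)⟩

lemma card_zero (s : ℕ) : #(Tset s 0) = 1 := by
  rw [card_eq_one]
  refine ⟨finZeroElim, eq_singleton_iff_unique_mem.2 ⟨?_, fun t _ => funext finZeroElim⟩⟩
  exact mem_iff.2 ⟨finZeroElim, finZeroElim⟩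

lemma card_succ (s n : ℕ) :
    #(Tset s (n + 1)) = #((alphabet s ×ˢ Tset s n).filter fun p => ¬CancelsHead p.1 p.2) := by
  refine card_bij' (fun t _ => (t 0, Fin.tail t)) (fun p _ => Fin.cons p.1 p.2) ?_ ?_ ?_ ?_
  · intro t ht
    rw [← Fin.cons_self_tail t, cons_mem_iff] at ht
    simpa [and_assoc] using ht
  · rintro ⟨a, u⟩ hp
    simpa [cons_mem_iff, and_assoc] using hp
  · intro t _
    exact Fin.cons_self_tail t
  · intro p _
    simp

lemma card_filter_cancelsHead_succ (s n : ℕ) :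
    #((alphabet s ×ˢ Tset s (n + 1)).filter fun p => CancelsHead p.1 p.2) =
      s * #(Tset s n) := by
  have hcard : #(Icc (1 : ℤ) s ×ˢ Tset s n) = s * #(Tset s n) := by
    simp [card_product]
  rw [← hcard]
  refine card_bij' (fun p _ => (p.1, Fin.tail p.2)) (fun p _ => (p.1, Fin.cons (-p.1) p.2))
    ?_ ?_ ?_ ?_
  · intro ⟨a, u⟩ hp
    obtain ⟨hmem, -, hpos, -⟩ := mem_filter.1 hp
    obtain ⟨ha, hu⟩ := mem_product.1 hmem
    rw [← Fin.cons_self_tail u, cons_mem_iff] at hu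
    exact mem_product.2 ⟨mem_Icc.2 ⟨hpos, (mem_alphabet.1 ha).2.1⟩, hu.2.1⟩
  · intro ⟨a, w⟩ hp
    obtain ⟨ha, hw⟩ := mem_product.1 hp
    rw [mem_Icc] at ha
    have ha_mem : a ∈ alphabet s := mem_alphabet.2 ⟨by omega, by omega, by omega⟩
    have hneg_mem : -a ∈ alphabet s := mem_alphabet.2 ⟨by omega, by omega, by omega⟩
    refine mem_filter.2 ⟨mem_product.2 ⟨ha_mem, ?_⟩, Nat.succ_pos n, by omega, rfl⟩
    exact cons_mem_iff.2 ⟨hneg_mem, hw, fun ⟨_, hneg_pos, _⟩ => by omega⟩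
  · intro ⟨a, u⟩ hp
    obtain ⟨-, _, -, hhead⟩ := mem_filter.1 hp
    simp only [Prod.mk.injEq, true_and]
    rw [← hhead]
    exact Fin.cons_self_tail u
  · intro p _
    simp

lemma card_succ_add_card_filter_cancelsHead (s n : ℕ) :
    #(Tset s (n + 1)) + #((alphabet s ×ˢ Tset s n).filter fun p => CancelsHead p.1 p.2) =
      2 * s * #(Tset s n) := by
  rw [card_succ, add_comm, card_filter_add_card_filter_not, card_product, card_alphabet]

end Tset

theorem stmt_8_general (s : ℕ) :
    (Tset s 0).card = 1 ∧ (Tset s 1).card = 2 * s ∧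
    ∀ n : ℕ, ((Tset s (n + 2)).card : ℤ)
      = 2 * s * ((Tset s (n + 1)).card : ℤ) - s * ((Tset s n).card : ℤ) := by
  refine ⟨Tset.card_zero s, ?_, fun n => ?_⟩
  · have hnone : ((Tset.alphabet s ×ˢ Tset s 0).filter
        fun p => Tset.CancelsHead p.1 p.2) = ∅ :=
      filter_false_of_mem fun _ _ ⟨h, _⟩ => Nat.lt_irrefl 0 h
    simpa [hnone, Tset.card_zero] using Tset.card_succ_add_card_filter_cancelsHead s 0
  · have h := Tset.card_succ_add_card_filter_cancelsHead s (n + 1)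
    rw [Tset.card_filter_cancelsHead_succ] at h
    rw [eq_sub_iff_add_eq]
    exact_mod_cast h

theorem stmt_8 (s : ℕ) (hs : 1 ≤ s) :
    (Tset s 0).card = 1 ∧ (Tset s 1).card = 2 * s ∧
    ∀ n : ℕ, ((Tset s (n + 2)).card : ℤ)
      = 2 * s * ((Tset s (n + 1)).card : ℤ) - s * ((Tset s n).card : ℤ) :=
  stmt_8_general s
end

section
/- For every integer s ≥ 2 and every n ≥ 0, one has the identity of real numbers Σ_{k=0}^{n} |T_k| = (r_+^{n+1} + r_-^{n+1} − 2) / (2(s−1)), where r_± = s·(1 ± √(1 − 1/s)). -/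
open Finset

/-!
Appending a letter to a string of `T_{m+1}` is allowed for all `2s` letters except `-a`
when the string ends in a positive letter `a`, and exactly `s |T_m|` strings of `T_{m+1}` end in
a positive letter. Hence `|T_{m+2}| = 2s |T_{m+1}| - s |T_m|` with `|T_0| = 1`, `|T_1| = 2s`, a
recurrence whose characteristic roots are `r_±` (`r_+ + r_- = 2s`, `r_+ r_- = s`). Summing it gives
`(1 - s) ∑_{k ≤ n} |T_k| = 1 + s |T_n| - |T_{n+1}|`, and the Binet formula
`(r_+ - r_-) |T_n| = r_+^{n+1} - r_-^{n+1}` turns this into the closed form.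
-/

section Recurrence

variable {R : Type*} [CommRing R] {u : ℕ → R}

theorem sub_mul_eq_of_recurrence {p q : R}
    (h : ∀ n, u (n + 2) = (p + q) * u (n + 1) - p * q * u n) (n : ℕ) :
    (p - q) * u n = (u 1 - q * u 0) * p ^ n - (u 1 - p * u 0) * q ^ n := by
  induction n using Nat.twoStepInduction with
  | zero => ring
  | one => ring
  | more n ih₀ ih₁ => rw [h]; linear_combination (p + q) * ih₁ - p * q * ih₀

theorem mul_sum_range_eq_of_recurrence {a b : R}
    (h : ∀ n, u (n + 2) = a * u (n + 1) - b * u n) (n : ℕ) :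
    (1 - a + b) * ∑ k ∈ range (n + 1), u k = u 1 + (1 - a) * u 0 + b * u n - u (n + 1) := by
  induction n with
  | zero => rw [zero_add, sum_range_one]; ring
  | succ n ih => rw [sum_range_succ, mul_add, ih, h]; ring

end Recurrence

theorem sum_range_eq_of_char_roots {K : Type*} [Field K] [NeZero (2 : K)] {N : ℕ → K}
    {c p q : K} (hpq : p ≠ q) (hc : c ≠ 1) (hsum : p + q = 2 * c) (hprod : p * q = c)
    (h0 : N 0 = 1) (h1 : N 1 = 2 * c) (h : ∀ n, N (n + 2) = 2 * c * N (n + 1) - c * N n)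
    (n : ℕ) :
    ∑ k ∈ range (n + 1), N k = (p ^ (n + 1) + q ^ (n + 1) - 2) / (2 * (c - 1)) := by
  have hpartial := mul_sum_range_eq_of_recurrence h n
  have h' (n : ℕ) : N (n + 2) = (p + q) * N (n + 1) - p * q * N n := by rw [hsum, hprod, h]
  have hsol₀ := sub_mul_eq_of_recurrence h' n
  have hsol₁ := sub_mul_eq_of_recurrence h' (n + 1)
  rw [h0, h1] at hpartial hsol₀ hsol₁
  rw [eq_div_iff (mul_ne_zero two_ne_zero (sub_ne_zero.2 hc)),
    ← mul_right_inj' (sub_ne_zero.2 hpq)]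
  linear_combination (-2 * (p - q)) * hpartial - 2 * c * hsol₀ + 2 * hsol₁
    + (2 * c * (p ^ n - q ^ n) - p ^ (n + 1) + q ^ (n + 1)) * hsum

noncomputable def letters (s : ℕ) : Finset ℤ := (Icc (-(s : ℤ)) s).erase 0

lemma card_letters (s : ℕ) : #(letters s) = 2 * s := by
  rw [letters, card_erase_of_mem (by simp), Int.card_Icc]
  omega

lemma neg_mem_letters {s : ℕ} {z : ℤ} (hz : z ∈ letters s) : -z ∈ letters s := by
  simp only [letters, mem_erase, mem_Icc] at hz ⊢
  omega

lemma mem_Tset {s n : ℕ} {t : Fin n → ℤ} :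
    t ∈ Tset s n ↔ (∀ i, t i ∈ letters s) ∧
      ∀ (i : Fin n) (h : (i : ℕ) + 1 < n), ¬(0 < t i ∧ t ⟨i + 1, h⟩ = -t i) := by
  simp only [Tset, letters, mem_filter, Fintype.mem_piFinset, mem_erase, forall_and]
  tauto

noncomputable def nextLetters (s : ℕ) {m : ℕ} (u : Fin m → ℤ) : Finset ℤ :=
  (letters s).filter fun z => ∀ i : Fin m, (i : ℕ) + 1 = m → ¬(0 < u i ∧ z = -u i)

lemma snoc_apply_mk {m : ℕ} (u : Fin m → ℤ) (z : ℤ) (k : ℕ) (hk : k < m + 1) :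
    (Fin.snoc u z : Fin (m + 1) → ℤ) ⟨k, hk⟩ = if h : k < m then u ⟨k, h⟩ else z := by
  simp [Fin.snoc]

lemma snoc_mem_Tset_iff {s m : ℕ} {u : Fin m → ℤ} {z : ℤ} :
    (Fin.snoc u z : Fin (m + 1) → ℤ) ∈ Tset s (m + 1) ↔ u ∈ Tset s m ∧ z ∈ nextLetters s u := by
  simp only [mem_Tset, nextLetters, mem_filter, Fin.forall_fin_succ', Fin.snoc_castSucc,
    Fin.snoc_last, Fin.val_castSucc, Fin.val_last, snoc_apply_mk]
  constructor
  · rintro ⟨⟨hu, hz⟩, hadj, -⟩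
    refine ⟨⟨hu, fun i h => by simpa [h] using hadj i (by omega)⟩, hz, fun i hi => ?_⟩
    simpa [hi] using hadj i (by omega)
  · rintro ⟨⟨hu, hadj⟩, hz, hlast⟩
    refine ⟨⟨hu, hz⟩, fun i _ => ?_, by omega⟩
    split_ifs with h
    exacts [hadj i h, hlast i (by omega)]

lemma card_filter_Tset_succ (s m : ℕ) (Q : ℤ → Prop) [DecidablePred Q] :
    #((Tset s (m + 1)).filter fun t => Q (t (Fin.last m)))
      = ∑ u ∈ Tset s m, #((nextLetters s u).filter Q) := by
  rw [← card_sigma]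
  refine card_nbij' (fun t => ⟨Fin.init t, t (Fin.last m)⟩) (fun x => Fin.snoc x.1 x.2)
    (fun t ht => ?_) (fun x hx => ?_) (fun t _ => Fin.snoc_init_self t) (fun x _ => ?_)
  · rw [mem_coe, mem_filter, ← Fin.snoc_init_self t, snoc_mem_Tset_iff, Fin.snoc_last] at ht
    simpa [mem_sigma, and_assoc] using ht
  · simp only [mem_coe, mem_sigma, mem_filter] at hx ⊢
    simpa [snoc_mem_Tset_iff, and_assoc] using hx
  · simp

lemma card_Tset_succ (s m : ℕ) : #(Tset s (m + 1)) = ∑ u ∈ Tset s m, #(nextLetters s u) := by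
  simpa using card_filter_Tset_succ s m fun _ => True

lemma filter_pos_nextLetters (s : ℕ) {m : ℕ} (u : Fin m → ℤ) :
    (nextLetters s u).filter (0 < ·) = Icc 1 (s : ℤ) := by
  ext z
  simp only [nextLetters, letters, mem_filter, mem_erase, mem_Icc]
  constructor
  · rintro ⟨⟨⟨-, -, hs⟩, -⟩, hz⟩
    omega
  · intro hz
    exact ⟨⟨⟨by omega, by omega, hz.2⟩, fun i _ h => by omega⟩, by omega⟩

lemma card_filter_Tset_pos_last (s m : ℕ) :
    #((Tset s (m + 1)).filter fun t => 0 < t (Fin.last m)) = s * #(Tset s m) := by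
  simp [card_filter_Tset_succ s m (0 < ·), filter_pos_nextLetters, mul_comm]

lemma nextLetters_succ (s k : ℕ) (u : Fin (k + 1) → ℤ) :
    nextLetters s u = (letters s).filter fun z => ¬(0 < u (Fin.last k) ∧ z = -u (Fin.last k)) := by
  refine filter_congr fun z _ => ⟨fun h => h _ rfl, fun h i hi => ?_⟩
  obtain rfl : i = Fin.last k := Fin.ext (by simpa using hi)
  exact h

lemma card_nextLetters_add_ite {s k : ℕ} {u : Fin (k + 1) → ℤ} (hu : u ∈ Tset s (k + 1)) :
    #(nextLetters s u) + (if 0 < u (Fin.last k) then 1 else 0) = 2 * s := by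
  rw [nextLetters_succ, ← card_letters s]
  split_ifs with hpos
  · simp only [hpos, true_and, filter_ne']
    exact card_erase_add_one <| neg_mem_letters ((mem_Tset.1 hu).1 _)
  · simp [hpos]

lemma card_Tset_zero (s : ℕ) : #(Tset s 0) = 1 :=
  card_eq_one.2 ⟨default, eq_singleton_iff_unique_mem.2
    ⟨by simp [mem_Tset], fun _ _ => Subsingleton.elim _ _⟩⟩

lemma card_Tset_one (s : ℕ) : #(Tset s 1) = 2 * s := by
  have hext (u : Fin 0 → ℤ) : nextLetters s u = letters s :=
    filter_true_of_mem fun _ _ i => i.elim0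
  simp [card_Tset_succ, hext, card_Tset_zero, card_letters]

lemma card_Tset_add_two (s k : ℕ) :
    #(Tset s (k + 2)) + s * #(Tset s k) = 2 * s * #(Tset s (k + 1)) := by
  rw [card_Tset_succ, ← card_filter_Tset_pos_last, card_filter, ← sum_add_distrib,
    sum_congr rfl fun u hu => card_nextLetters_add_ite hu, sum_const, smul_eq_mul, mul_comm]

theorem stmt_10 (s : ℕ) (hs : 2 ≤ s) (n : ℕ) :
    ∑ k ∈ Finset.range (n + 1), ((Tset s k).card : ℝ)
      = (((s : ℝ) * (1 + Real.sqrt (1 - 1 / (s : ℝ)))) ^ (n + 1)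
          + ((s : ℝ) * (1 - Real.sqrt (1 - 1 / (s : ℝ)))) ^ (n + 1) - 2)
        / (2 * ((s : ℝ) - 1)) := by
  have hs' : (2 : ℝ) ≤ s := by exact_mod_cast hs
  have hdisc : 0 < 1 - 1 / (s : ℝ) := by
    rw [sub_pos, div_lt_one (by linarith)]
    linarith
  set x := Real.sqrt (1 - 1 / (s : ℝ))
  have hx : (s : ℝ) * x ^ 2 = s - 1 := by
    rw [Real.sq_sqrt hdisc.le]
    field_simp
  have hx_pos : 0 < x := Real.sqrt_pos.2 hdisc
  have hrec (k : ℕ) :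
      (#(Tset s (k + 2)) : ℝ) = 2 * s * #(Tset s (k + 1)) - s * #(Tset s k) := by
    have h := congrArg (Nat.cast : ℕ → ℝ) (card_Tset_add_two s k)
    push_cast at h
    linear_combination h
  exact sum_range_eq_of_char_roots (by nlinarith) (by linarith) (by ring)
    (by linear_combination -(s : ℝ) * hx) (by simp [card_Tset_zero]) (by simp [card_Tset_one])
    hrec n
end

section
/- Let C ⊆ (ZMod 2)^7 be the [7,4,3] Hamming code, i.e., the F₂-linear span of the four generators 1000110, 0100101, 0010011, 0001111, and let C_0 and C_1 be its subsets of codewords of even and odd Hamming weight respectively (each has 8 elements). Define ψ_0 = (1/√8)·Σ_{c∈C_0} e_c and ψ_1 = (1/√8)·Σ_{c∈C_1} e_c in the Hilbert space of 7 qubits. Then for all binary strings a, b of length 7 with |{i : a_i ≠ 0 or b_i ≠ 0}| ≤ 2 (i.e., for every 7-qubit Pauli operator of weight at most 2), one has ⟨ψ_0, (X^a Z^b) ψ_1⟩ = 0 and ⟨ψ_0, (X^a Z^b) ψ_0⟩ = ⟨ψ_1, (X^a Z^b) ψ_1⟩; that is, ψ_0, ψ_1 are the logical codewords of a quantum code of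 distance 3 (the Steane code). -/
open Finset

/-- The `[7,4,3]` Hamming code: the `F₂`-linear span of
`1000110, 0100101, 0010011, 0001111`. -/
def hammingCode : Submodule (ZMod 2) (Fin 7 → ZMod 2) :=
  Submodule.span (ZMod 2)
    {![1,0,0,0,1,1,0], ![0,1,0,0,1,0,1], ![0,0,1,0,0,1,1], ![0,0,0,1,1,1,1]}

open Classical in
/-- The even-weight Hamming codewords. -/
noncomputable def steaneC0 : Finset (Fin 7 → ZMod 2) :=
  Finset.univ.filter (fun c => c ∈ hammingCode ∧ Even (hammingNorm c))

open Classical in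
/-- The odd-weight Hamming codewords. -/
noncomputable def steaneC1 : Finset (Fin 7 → ZMod 2) :=
  Finset.univ.filter (fun c => c ∈ hammingCode ∧ Odd (hammingNorm c))

/-!
Against basis-vector sums the Pauli operator gives a signed count:
`⟪∑_{c ∈ S} e_c, X^a Z^b ∑_{c ∈ T} e_c⟫ = ∑_{d ∈ S, d + a ∈ T} (-1)^{b·(d+a)}`.
A Hamming codeword of weight at most `2` is `0`. So if `a ≠ 0`, no `d ∈ C` has `d + a ∈ C`
and every such inner product vanishes. If `a = 0`, the off-diagonal term vanishes because
`C₀` and `C₁` are disjoint, and the difference of the diagonal terms is the character sum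
`∑_{c ∈ C} (-1)^{(1 + b)·c}`, which vanishes unless `1 + b ∈ C^⊥`. Since `C^⊥ ⊆ C` and
`1 ∈ C`, that would give `b ∈ C`, hence `b = 0` and `1 ∈ C^⊥`; but `1·1 = 7` is odd.
-/

open Matrix

theorem omegaQ_two : omegaQ 2 = -1 := by
  rw [omegaQ, Nat.cast_ofNat, mul_assoc, mul_div_cancel_left₀ _ two_ne_zero,
    Complex.exp_pi_mul_I]

theorem inner_sum_single_pauliXZ {n q : ℕ} [NeZero q] (S T : Finset (Fin n → ZMod q))
    (a b : Fin n → ZMod q) :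
    inner ℂ (∑ c ∈ S, EuclideanSpace.single c (1 : ℂ))
        (pauliXZ n q a b (∑ c ∈ T, EuclideanSpace.single c (1 : ℂ))) =
      ∑ d ∈ S with d + a ∈ T, omegaQ q ^ (b ⬝ᵥ (d + a)).val := by
  have hsum : ∀ (U : Finset (Fin n → ZMod q)) d,
      (∑ c ∈ U, EuclideanSpace.single c (1 : ℂ)) d = if d ∈ U then 1 else 0 := by
    intro U d
    simp [Finset.sum_apply]
  have hP : ∀ (ψ : EuclideanSpace ℂ (Fin n → ZMod q)) d,
      pauliXZ n q a b ψ d = omegaQ q ^ (b ⬝ᵥ (d + a)).val * ψ (d + a) := fun _ _ => rfl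
  rw [PiLp.inner_apply, Finset.sum_filter]
  conv_rhs => rw [← Finset.sum_ite_mem_eq]
  refine Finset.sum_congr rfl fun d _ => ?_
  simp only [hP, hsum, RCLike.inner_apply]
  split_ifs <;> simp

theorem inner_sum_single_pauliXZ_eq_zero {n q : ℕ} [NeZero q]
    {C : Submodule (ZMod q) (Fin n → ZMod q)} {S T : Finset (Fin n → ZMod q)}
    (hS : ∀ c ∈ S, c ∈ C) (hT : ∀ c ∈ T, c ∈ C) {a : Fin n → ZMod q} (ha : a ∉ C)
    (b : Fin n → ZMod q) :
    inner ℂ (∑ c ∈ S, EuclideanSpace.single c (1 : ℂ))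
      (pauliXZ n q a b (∑ c ∈ T, EuclideanSpace.single c (1 : ℂ))) = 0 := by
  rw [inner_sum_single_pauliXZ, Finset.sum_eq_zero]
  intro d hd
  rw [Finset.mem_filter] at hd
  exact absurd ((C.add_mem_iff_right (hS d hd.1)).1 (hT _ hd.2)) ha

theorem neg_one_pow_val_add {R : Type*} [Ring R] (x y : ZMod 2) :
    (-1 : R) ^ (x + y).val = (-1) ^ x.val * (-1) ^ y.val := by
  rw [ZMod.val_add, ← pow_add, neg_one_pow_eq_pow_mod_two (x.val + y.val)]

theorem neg_one_pow_hammingNorm {R : Type*} [Ring R] {n : ℕ}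
    (c : Fin n → ZMod 2) : (-1 : R) ^ hammingNorm c = (-1) ^ (1 ⬝ᵥ c).val := by
  have : ((hammingNorm c : ℕ) : ZMod 2) = 1 ⬝ᵥ c := by
    rw [one_dotProduct, hammingNorm, Finset.natCast_card_filter]
    refine Finset.sum_congr rfl fun i _ => ?_
    generalize c i = x
    fin_cases x <;> rfl
  rw [← this, ZMod.val_natCast, neg_one_pow_eq_pow_mod_two (hammingNorm c)]

theorem hammingNorm_le_ncard {ι β : Type*} [Fintype ι] [Zero β] [DecidableEq β] (x : ι → β)
    {s : Set ι} (hs : ∀ i, x i ≠ 0 → i ∈ s) : hammingNorm x ≤ s.ncard := by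
  rw [hammingNorm, ← Set.ncard_coe_finset]
  exact Set.ncard_le_ncard (fun i hi => hs i (by simpa using hi)) (Set.toFinite s)

theorem sum_neg_one_pow_dotProduct_eq_zero {R : Type*} [Ring R] [NoZeroDivisors R] [CharZero R]
    {n : ℕ} (C : Submodule (ZMod 2) (Fin n → ZMod 2)) [DecidablePred (· ∈ C)]
    {v w : Fin n → ZMod 2} (hw : w ∈ C) (hvw : v ⬝ᵥ w ≠ 0) :
    ∑ c with c ∈ C, (-1 : R) ^ (v ⬝ᵥ c).val = 0 := by
  replace hvw : v ⬝ᵥ w = 1 := by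
    generalize v ⬝ᵥ w = x at hvw
    revert x; decide
  rw [← self_eq_neg]
  calc ∑ c with c ∈ C, (-1 : R) ^ (v ⬝ᵥ c).val
      = ∑ c with c ∈ C, (-1 : R) ^ (v ⬝ᵥ (c + w)).val :=
        (Finset.sum_equiv (Equiv.addRight w) (by simp [C.add_mem_iff_left hw])
          fun _ _ => rfl).symm
    _ = -∑ c with c ∈ C, (-1 : R) ^ (v ⬝ᵥ c).val := by
        simp [dotProduct_add, neg_one_pow_val_add, hvw, Finset.sum_neg_distrib, ZMod.val_one]

section BinaryCode

variable {n : ℕ}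

open scoped Classical in
noncomputable def evenWords (C : Submodule (ZMod 2) (Fin n → ZMod 2)) :
    Finset (Fin n → ZMod 2) :=
  Finset.univ.filter (fun c => c ∈ C ∧ Even (hammingNorm c))

open scoped Classical in
noncomputable def oddWords (C : Submodule (ZMod 2) (Fin n → ZMod 2)) :
    Finset (Fin n → ZMod 2) :=
  Finset.univ.filter (fun c => c ∈ C ∧ Odd (hammingNorm c))

variable {C : Submodule (ZMod 2) (Fin n → ZMod 2)}

theorem mem_evenWords {c : Fin n → ZMod 2} :
    c ∈ evenWords C ↔ c ∈ C ∧ Even (hammingNorm c) := by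
  simp [evenWords]

theorem mem_oddWords {c : Fin n → ZMod 2} :
    c ∈ oddWords C ↔ c ∈ C ∧ Odd (hammingNorm c) := by
  simp [oddWords]

open scoped Classical in
theorem sum_evenWords_sub_sum_oddWords {R : Type*} [Ring R] (f : (Fin n → ZMod 2) → R) :
    ∑ c ∈ evenWords C, f c - ∑ c ∈ oddWords C, f c =
      ∑ c with c ∈ C, (-1) ^ hammingNorm c * f c := by
  rw [evenWords, oddWords, Finset.sum_filter, Finset.sum_filter, Finset.sum_filter,
    ← Finset.sum_sub_distrib]
  refine Finset.sum_congr rfl fun c _ => ?_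
  rcases Nat.even_or_odd (hammingNorm c) with h | h <;>
    by_cases hc : c ∈ C <;>
      simp [h, hc, h.neg_one_pow, Nat.not_odd_iff_even, Nat.not_even_iff_odd]

theorem exists_mem_one_add_dotProduct_ne_zero
    (hdual : ∀ v, (∀ c ∈ C, v ⬝ᵥ c = 0) → v ∈ C) (hone : 1 ∈ C) (hn : Odd n)
    {b : Fin n → ZMod 2} (hb : b ∈ C → b = 0) : ∃ w ∈ C, (1 + b) ⬝ᵥ w ≠ 0 := by
  by_contra! h
  obtain rfl : b = 0 := hb ((C.add_mem_iff_right hone).1 (hdual _ h))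
  have h1 := h 1 hone
  rw [add_zero, one_dotProduct_one, Fintype.card_fin, ZMod.natCast_eq_one_iff_odd.2 hn] at h1
  exact one_ne_zero h1

open scoped Classical in
theorem sum_evenWords_eq_sum_oddWords
    (hdual : ∀ v, (∀ c ∈ C, v ⬝ᵥ c = 0) → v ∈ C) (hone : 1 ∈ C) (hn : Odd n)
    {b : Fin n → ZMod 2} (hb : b ∈ C → b = 0) :
    ∑ c ∈ evenWords C, (-1 : ℂ) ^ (b ⬝ᵥ c).val =
      ∑ c ∈ oddWords C, (-1 : ℂ) ^ (b ⬝ᵥ c).val := by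
  obtain ⟨w, hw, hbw⟩ := exists_mem_one_add_dotProduct_ne_zero hdual hone hn hb
  rw [← sub_eq_zero, sum_evenWords_sub_sum_oddWords,
    ← sum_neg_one_pow_dotProduct_eq_zero C hw hbw]
  refine Finset.sum_congr rfl fun c _ => ?_
  rw [neg_one_pow_hammingNorm, add_dotProduct, neg_one_pow_val_add]

theorem inner_evenWords_pauliXZ_oddWords {a : Fin n → ZMod 2} (ha : a ∈ C → a = 0)
    (b : Fin n → ZMod 2) :
    inner ℂ (∑ c ∈ evenWords C, EuclideanSpace.single c (1 : ℂ))
      (pauliXZ n 2 a b (∑ c ∈ oddWords C, EuclideanSpace.single c (1 : ℂ))) = 0 := by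
  rw [inner_sum_single_pauliXZ, Finset.sum_eq_zero]
  intro d hd
  rw [Finset.mem_filter, mem_evenWords, mem_oddWords] at hd
  obtain ⟨⟨hdC, hd0⟩, hdaC, hda1⟩ := hd
  obtain rfl := ha ((C.add_mem_iff_right hdC).1 hdaC)
  rw [add_zero, ← Nat.not_even_iff_odd] at hda1
  exact absurd hd0 hda1

theorem inner_evenWords_pauliXZ_evenWords_eq_oddWords
    (hdual : ∀ v, (∀ c ∈ C, v ⬝ᵥ c = 0) → v ∈ C) (hone : 1 ∈ C) (hn : Odd n)
    {a b : Fin n → ZMod 2} (ha : a ∈ C → a = 0) (hb : b ∈ C → b = 0) :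
    inner ℂ (∑ c ∈ evenWords C, EuclideanSpace.single c (1 : ℂ))
        (pauliXZ n 2 a b (∑ c ∈ evenWords C, EuclideanSpace.single c (1 : ℂ))) =
      inner ℂ (∑ c ∈ oddWords C, EuclideanSpace.single c (1 : ℂ))
        (pauliXZ n 2 a b (∑ c ∈ oddWords C, EuclideanSpace.single c (1 : ℂ))) := by
  by_cases ha0 : a = 0
  · subst ha0
    simp only [inner_sum_single_pauliXZ, add_zero, Finset.filter_true_of_mem fun _ h => h,
      omegaQ_two]
    exact sum_evenWords_eq_sum_oddWords hdual hone hn hb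
  · have ha' : a ∉ C := fun h => ha0 (ha h)
    have hC0 : ∀ c ∈ evenWords C, c ∈ C := fun _ h => (mem_evenWords.1 h).1
    have hC1 : ∀ c ∈ oddWords C, c ∈ C := fun _ h => (mem_oddWords.1 h).1
    rw [inner_sum_single_pauliXZ_eq_zero hC0 hC0 ha', inner_sum_single_pauliXZ_eq_zero hC1 hC1 ha']

end BinaryCode

def hammingParityCheck : Matrix (Fin 3) (Fin 7) (ZMod 2) :=
  !![1, 1, 0, 1, 1, 0, 0; 1, 0, 1, 1, 0, 1, 0; 0, 1, 1, 1, 0, 0, 1]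

set_option maxRecDepth 10000 in
theorem mem_hammingCode_iff {c : Fin 7 → ZMod 2} :
    c ∈ hammingCode ↔ hammingParityCheck *ᵥ c = 0 := by
  constructor
  · intro hc
    have : hammingCode ≤ LinearMap.ker hammingParityCheck.mulVecLin := by
      rw [hammingCode, Submodule.span_le]
      simp only [Set.insert_subset_iff, Set.singleton_subset_iff, SetLike.mem_coe,
        LinearMap.mem_ker, Matrix.mulVecLin_apply]
      decide
    exact this hc
  · intro hc
    -- The generators are in systematic form: a codeword is fixed by its first four bits.
    have hdecomp : ∀ c : Fin 7 → ZMod 2, hammingParityCheck *ᵥ c = 0 →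
        c = c 0 • ![1,0,0,0,1,1,0] + c 1 • ![0,1,0,0,1,0,1]
          + c 2 • ![0,0,1,0,0,1,1] + c 3 • ![0,0,0,1,1,1,1] := by decide
    rw [hdecomp c hc, hammingCode]
    refine add_mem (add_mem (add_mem ?_ ?_) ?_) ?_ <;>
      exact Submodule.smul_mem _ _ (Submodule.subset_span (by simp))

instance : DecidablePred (· ∈ hammingCode) :=
  fun _ => decidable_of_iff _ mem_hammingCode_iff.symm

set_option maxRecDepth 10000 in
theorem eq_zero_of_mem_hammingCode_of_hammingNorm_le_two {c : Fin 7 → ZMod 2}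
    (hc : c ∈ hammingCode) (h : hammingNorm c ≤ 2) : c = 0 := by
  revert c
  decide

theorem one_mem_hammingCode : (1 : Fin 7 → ZMod 2) ∈ hammingCode := by decide

set_option maxRecDepth 10000 in
theorem mem_hammingCode_of_forall_dotProduct_eq_zero {v : Fin 7 → ZMod 2}
    (hv : ∀ c ∈ hammingCode, v ⬝ᵥ c = 0) : v ∈ hammingCode := by
  have hgen : ∀ v : Fin 7 → ZMod 2,
      v ⬝ᵥ ![1,0,0,0,1,1,0] = 0 → v ⬝ᵥ ![0,1,0,0,1,0,1] = 0 →
      v ⬝ᵥ ![0,0,1,0,0,1,1] = 0 → v ⬝ᵥ ![0,0,0,1,1,1,1] = 0 → v ∈ hammingCode := by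
    decide
  exact hgen v (hv _ (Submodule.subset_span (by simp))) (hv _ (Submodule.subset_span (by simp)))
    (hv _ (Submodule.subset_span (by simp))) (hv _ (Submodule.subset_span (by simp)))

theorem card_steaneC0 : steaneC0.card = 8 := by
  unfold steaneC0
  convert (by decide : (univ.filter fun c => c ∈ hammingCode ∧ Even (hammingNorm c)).card = 8)

theorem card_steaneC1 : steaneC1.card = 8 := by
  unfold steaneC1
  convert (by decide : (univ.filter fun c => c ∈ hammingCode ∧ Odd (hammingNorm c)).card = 8)

theorem steaneC0_eq_evenWords : steaneC0 = evenWords hammingCode := rfl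

theorem steaneC1_eq_oddWords : steaneC1 = oddWords hammingCode := rfl

theorem stmt_17
    (ψ0 ψ1 : EuclideanSpace ℂ (Fin 7 → ZMod 2))
    (hψ0 : ψ0 = ((1 / Real.sqrt 8 : ℝ) : ℂ) •
      ∑ c ∈ steaneC0, EuclideanSpace.single c (1 : ℂ))
    (hψ1 : ψ1 = ((1 / Real.sqrt 8 : ℝ) : ℂ) •
      ∑ c ∈ steaneC1, EuclideanSpace.single c (1 : ℂ)) :
    steaneC0.card = 8 ∧ steaneC1.card = 8 ∧
    ∀ a b : Fin 7 → ZMod 2,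
      ({i : Fin 7 | a i ≠ 0 ∨ b i ≠ 0} : Set (Fin 7)).ncard ≤ 2 →
        (inner ℂ ψ0 (pauliXZ 7 2 a b ψ1) : ℂ) = 0 ∧
        (inner ℂ ψ0 (pauliXZ 7 2 a b ψ0) : ℂ) = inner ℂ ψ1 (pauliXZ 7 2 a b ψ1) := by
  refine ⟨card_steaneC0, card_steaneC1, fun a b hab => ?_⟩
  have ha : a ∈ hammingCode → a = 0 := fun h => eq_zero_of_mem_hammingCode_of_hammingNorm_le_two
    h ((hammingNorm_le_ncard a fun _ => Or.inl).trans hab)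
  have hb : b ∈ hammingCode → b = 0 := fun h => eq_zero_of_mem_hammingCode_of_hammingNorm_le_two
    h ((hammingNorm_le_ncard b fun _ => Or.inr).trans hab)
  subst hψ0 hψ1
  simp only [map_smul, inner_smul_left, inner_smul_right, steaneC0_eq_evenWords,
    steaneC1_eq_oddWords]
  rw [inner_evenWords_pauliXZ_oddWords ha, inner_evenWords_pauliXZ_evenWords_eq_oddWords
    (fun _ => mem_hammingCode_of_forall_dotProduct_eq_zero) one_mem_hammingCode
    (by decide) ha hb]
  exact ⟨by simp, rfl⟩
end
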